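/- arXiv:0710.0939 — 5 statements merged into one kernel-verified Lean document; each statement's English description precedes it below -/
import Mathlib

section
/- Let d ≥ 1, let η ∈ X be a sandpile configuration on ℤ^d, and let T and T' be two legal toppling procedures which are both finite for η. If T is stabilizing for η, then T'(∞, x, η) ≤ T(∞, x, η) for every x ∈ ℤ^d. -/
open MeasureTheory Filter Topology
open scoped ENNReal NNReal

/-- Sites of the lattice `ℤ^d`. -/
abbrev Site (d : ℕ) := Fin d → ℤ

/-- Sandpile configurations: `X = ℕ^{ℤ^d}`. -/
abbrev Config (d : ℕ) := Site d → ℕ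

/-- Nearest-neighbor adjacency on `ℤ^d` (`ℓ¹`-distance one). -/
def Adjacent {d : ℕ} (x y : Site d) : Prop :=
  (∑ i, (x i - y i).natAbs) = 1

/-- Sum of the values of `f` over the `2d` nearest neighbors of `y`. -/
def nbrSum {d : ℕ} {M : Type*} [AddCommMonoid M] (f : Site d → M) (y : Site d) : M :=
  ∑ i : Fin d, (f (Function.update y i (y i + 1)) + f (Function.update y i (y i - 1)))

/-- The left limit `T(t-, x, η)` of a (monotone, `ℕ`-valued) toppling function. -/
noncomputable def leftVal {d : ℕ} (T : NNReal → Site d → Config d → ℕ)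
    (t : NNReal) (x : Site d) (η : Config d) : ℕ :=
  sSup ((fun s => T s x η) '' Set.Iio t)

/-- A toppling procedure on `ℤ^d` (Definition 2.1): a measurable map
`T : [0,∞) × ℤ^d × X → ℕ` such that (a) `T(0,x,η) = 0`; (b) `t ↦ T(t,x,η)` is
right-continuous, nondecreasing, with jumps of size at most one; (c) finitely many
jumps in every finite time interval; (d) no infinite backward chain of topplings. -/
structure TopplingProcedure (d : ℕ) where
  T : NNReal → Site d → Config d → ℕ
  measurable : ∀ x : Site d, Measurable fun p : NNReal × Config d => T p.1 x p.2
  init : ∀ (x : Site d) (η : Config d), T 0 x η = 0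
  mono : ∀ (x : Site d) (η : Config d), Monotone fun t => T t x η
  jumpLe : ∀ (x : Site d) (η : Config d) (t : NNReal), T t x η ≤ leftVal T t x η + 1
  rightCont : ∀ (x : Site d) (η : Config d) (t : NNReal),
    ∃ ε : NNReal, 0 < ε ∧ ∀ s, t ≤ s → s < t + ε → T s x η = T t x η
  finJumps : ∀ (x : Site d) (η : Config d) (b : NNReal),
    {t : NNReal | t ≤ b ∧ leftVal T t x η < T t x η}.Finite
  noBackwardChain : ∀ η : Config d, ¬ ∃ (xs : ℕ → Site d) (ts : ℕ → NNReal),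
    (∀ i, Adjacent (xs (i + 1)) (xs i)) ∧ StrictAnti ts ∧
    (∀ i, leftVal T (ts i) (xs i) η < T (ts i) (xs i) η)

namespace TopplingProcedure

variable {d : ℕ}

/-- The configuration `η_t = η − Δ T(t,·,η)` at time `t` (as a `ℤ`-valued function). -/
def configAt (P : TopplingProcedure d) (η : Config d) (t : NNReal) (y : Site d) : ℤ :=
  (η y : ℤ) + nbrSum (fun x => (P.T t x η : ℤ)) y - 2 * d * (P.T t y η : ℤ)

/-- The configuration `η_{t-}` just before time `t`. -/
noncomputable def configLeft (P : TopplingProcedure d) (η : Config d) (t : NNReal)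
    (y : Site d) : ℤ :=
  (η y : ℤ) + nbrSum (fun x => (leftVal P.T t x η : ℤ)) y - 2 * d * (leftVal P.T t y η : ℤ)

/-- Site `x` topples at time `t` if `T(t,x,η) > T(t-,x,η)`. -/
def TopplesAt (P : TopplingProcedure d) (η : Config d) (x : Site d) (t : NNReal) : Prop :=
  leftVal P.T t x η < P.T t x η

/-- A toppling procedure is legal if only unstable sites are toppled:
whenever `x` topples at time `t > 0`, `η_{t-}(x) ≥ 2d`. -/
def Legal (P : TopplingProcedure d) : Prop :=
  ∀ (η : Config d) (t : NNReal) (x : Site d), 0 < t → P.TopplesAt η x t →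
    (2 * d : ℤ) ≤ P.configLeft η t x

/-- `T` is finite for `η` if `T(∞,x,η) = sup_t T(t,x,η) < ∞` for every `x`. -/
def FiniteFor (P : TopplingProcedure d) (η : Config d) : Prop :=
  ∀ x : Site d, BddAbove (Set.range fun t => P.T t x η)

/-- `T(∞,x,η) = sup_{t ≥ 0} T(t,x,η)`. -/
noncomputable def Tinf (P : TopplingProcedure d) (η : Config d) (x : Site d) : ℕ :=
  sSup (Set.range fun t => P.T t x η)

/-- The limit configuration `η_∞ = η − Δ T(∞,·,η)` (as a `ℤ`-valued function). -/
noncomputable def finalConfig (P : TopplingProcedure d) (η : Config d) (y : Site d) : ℤ :=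
  (η y : ℤ) + nbrSum (fun x => (P.Tinf η x : ℤ)) y - 2 * d * (P.Tinf η y : ℤ)

/-- `T` is stabilizing for `η` if it is finite for `η` and the limit configuration
`η_∞` is stable, i.e. takes values in `{0, 1, …, 2d−1}`. -/
def StabilizingFor (P : TopplingProcedure d) (η : Config d) : Prop :=
  P.FiniteFor η ∧ ∀ y : Site d, 0 ≤ P.finalConfig η y ∧ P.finalConfig η y ≤ 2 * d - 1

end TopplingProcedure

/-- A configuration `η` is stabilizable if there exists a stabilizing legal
toppling procedure for `η`. -/
def Stabilizable {d : ℕ} (η : Config d) : Prop :=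
  ∃ P : TopplingProcedure d, P.Legal ∧ P.StabilizingFor η

/-- The shift of a configuration by a lattice vector `v`. -/
def shiftConfig {d : ℕ} (v : Site d) (η : Config d) : Config d := fun x => η (x + v)

/-- A probability measure on `X` is translation invariant if it is invariant
under all shifts of `ℤ^d`. -/
def TransInvariant {d : ℕ} (μ : Measure (Config d)) : Prop :=
  ∀ v : Site d, Measure.map (shiftConfig v) μ = μ

/-- `μ` is a product measure: under `μ` the coordinates `(η(x))` are i.i.d. -/
def IsProductMeasure {d : ℕ} (μ : Measure (Config d)) : Prop :=
  ProbabilityTheory.iIndepFun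
      (fun (x : Site d) (η : Config d) => η x) μ ∧
    ∀ x : Site d, Measure.map (fun η : Config d => η x) μ
      = Measure.map (fun η : Config d => η (0 : Site d)) μ

/-- `x` belongs to the set `T_∞` of sites that topple during stabilization of `η`. -/
def ToppledInf {d : ℕ} (η : Config d) (x : Site d) : Prop :=
  ∃ P : TopplingProcedure d, P.Legal ∧ P.StabilizingFor η ∧ 0 < P.Tinf η x

/-- `x` belongs to `W_∞ = T_∞ ∪ {x : η_∞(x) > 0}`: `x` topples during stabilization
of `η`, or is nonempty after stabilization. -/
def InWinf {d : ℕ} (η : Config d) (x : Site d) : Prop :=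
  ∃ P : TopplingProcedure d, P.Legal ∧ P.StabilizingFor η ∧
    (0 < P.Tinf η x ∨ 0 < P.finalConfig η x)

/-- `y` lies in the cluster of `x` of the set `S`: `x` and `y` are joined by a
nearest-neighbor path inside `S`. -/
def InClusterOf {d : ℕ} (S : Site d → Prop) (x y : Site d) : Prop :=
  ∃ (k : ℕ) (f : ℕ → Site d), f 0 = x ∧ f k = y ∧ (∀ i ≤ k, S (f i)) ∧
    ∀ i < k, Adjacent (f i) (f (i + 1))

/-!
Call a toppling of `y` at time `t` under `T'` *excessive* if it brings the number of topplings
of `y` above `T(∞, y)`. Just before an excessive toppling, `y` has toppled at least `T(∞, y)`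
times under `T'`, and it is unstable, whereas `η_∞(y) ≤ 2d - 1`. Comparing the two
configurations at `y`, some neighbour `z` of `y` must already have toppled more than `T(∞, z)`
times under `T'`, so an excessive toppling of `z` happened strictly earlier. An excessive
toppling therefore starts an infinite backward chain of topplings, which `T'` does not have.
-/

open Function

variable {d : ℕ}

theorem adjacent_update_self (y : Site d) (i : Fin d) {c : ℤ} (hc : (c - y i).natAbs = 1) :
    Adjacent (update y i c) y := by
  unfold Adjacent
  rw [Finset.sum_eq_single i (fun j _ hj => by simp [update_of_ne hj]) (by simp)]
  simpa using hc

theorem exists_adjacent_lt_of_nbrSum_lt {f g : Site d → ℤ} {y : Site d}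
    (h : nbrSum f y < nbrSum g y) : ∃ z, Adjacent z y ∧ f z < g z := by
  obtain ⟨i, -, hi⟩ := Finset.exists_lt_of_sum_lt h
  by_cases hup : f (update y i (y i + 1)) < g (update y i (y i + 1))
  · exact ⟨update y i (y i + 1), adjacent_update_self y i (by simp), hup⟩
  · exact ⟨update y i (y i - 1), adjacent_update_self y i (by simp), by omega⟩

section LeftLimit

variable (T : NNReal → Site d → Config d → ℕ) {t : NNReal} {x : Site d} {η : Config d}
  {n : ℕ}

theorem leftVal_le (h : ∀ s < t, T s x η ≤ n) : leftVal T t x η ≤ n :=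
  csSup_le' <| by rintro _ ⟨s, hs, rfl⟩; exact h s hs

theorem exists_lt_of_lt_leftVal (h : n < leftVal T t x η) : ∃ s < t, n < T s x η := by
  have hne : ((fun s => T s x η) '' Set.Iio t).Nonempty := by
    by_contra hempty
    rw [Set.not_nonempty_iff_eq_empty] at hempty
    simp [leftVal, hempty] at h
  obtain ⟨_, ⟨s, hs, rfl⟩, hlt⟩ := exists_lt_of_lt_csSup hne h
  exact ⟨s, hs, hlt⟩

end LeftLimit

namespace TopplingProcedure

variable (P : TopplingProcedure d) (η : Config d)

theorem pos_of_topplesAt {x : Site d} {t : NNReal} (h : P.TopplesAt η x t) : 0 < t := by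
  refine pos_of_ne_zero fun ht => ?_
  subst ht
  simp [TopplesAt, P.init] at h

/-- The first time at which the toppling count of `x` exceeds `n` is a toppling time. -/
theorem exists_topplesAt_of_lt {x : Site d} {s : NNReal} {n : ℕ} (h : n < P.T s x η) :
    ∃ t ≤ s, P.TopplesAt η x t ∧ n < P.T t x η := by
  set A : Set NNReal := {u | n < P.T u x η}
  have hbdd : BddBelow A := OrderBot.bddBelow A
  have htA : n < P.T (sInf A) x η := by
    obtain ⟨ε, hε, hconst⟩ := P.rightCont x η (sInf A)
    obtain ⟨u, huA, hu⟩ := exists_lt_of_csInf_lt ⟨s, h⟩ (lt_add_of_pos_right (sInf A) hε)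
    rwa [← hconst u (csInf_le hbdd huA) hu]
  have hleft : leftVal P.T (sInf A) x η ≤ n :=
    leftVal_le P.T fun u hu => not_lt.1 (show u ∉ A from notMem_of_lt_csInf hu hbdd)
  exact ⟨sInf A, csInf_le hbdd h, hleft.trans_lt htA, htA⟩

theorem wellFounded_earlierAdjacentToppling :
    WellFounded fun q p : Site d × NNReal =>
      P.TopplesAt η q.1 q.2 ∧ Adjacent q.1 p.1 ∧ q.2 < p.2 := by
  refine wellFounded_iff_isEmpty_descending_chain.2 ⟨fun ⟨f, hf⟩ => P.noBackwardChain η ?_⟩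
  refine ⟨fun i => (f (i + 1)).1, fun i => (f (i + 1)).2, fun i => (hf (i + 1)).2.1,
    strictAnti_nat_of_succ_lt fun i => (hf (i + 1)).2.2, fun i => (hf i).1⟩

end TopplingProcedure

section Comparison

open TopplingProcedure

variable (T T' : TopplingProcedure d) (η : Config d)

def ExcessToppling (p : Site d × NNReal) : Prop :=
  T'.TopplesAt η p.1 p.2 ∧ T.Tinf η p.1 < T'.T p.2 p.1 η

variable {T T' η}

theorem exists_excessToppling {x : Site d} (h : T.Tinf η x < T'.Tinf η x) :
    ∃ t, ExcessToppling T T' η (x, t) := by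
  obtain ⟨_, ⟨s, rfl⟩, hs⟩ := exists_lt_of_lt_csSup (Set.range_nonempty _) h
  obtain ⟨t, -, htop, hlt⟩ := T'.exists_topplesAt_of_lt η hs
  exact ⟨t, htop, hlt⟩

theorem exists_earlier_adjacent_excessToppling (hT' : T'.Legal)
    (hstable : ∀ y, T.finalConfig η y ≤ 2 * d - 1) {p : Site d × NNReal}
    (hp : ExcessToppling T T' η p) :
    ∃ q, Adjacent q.1 p.1 ∧ q.2 < p.2 ∧ ExcessToppling T T' η q := by
  obtain ⟨y, t⟩ := p
  obtain ⟨htop, hexcess⟩ : T'.TopplesAt η y t ∧ T.Tinf η y < T'.T t y η := hp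
  have hunstable := hT' η t y (T'.pos_of_topplesAt η htop) htop
  have hfinal := hstable y
  have hy : (T.Tinf η y : ℤ) ≤ leftVal T'.T t y η := by
    have := T'.jumpLe y η t
    omega
  have hnbr : nbrSum (fun z => (T.Tinf η z : ℤ)) y <
      nbrSum (fun z => (leftVal T'.T t z η : ℤ)) y := by
    unfold configLeft at hunstable
    unfold finalConfig at hfinal
    nlinarith
  obtain ⟨z, hzy, hz⟩ := exists_adjacent_lt_of_nbrSum_lt hnbr
  obtain ⟨u, hut, hu⟩ := exists_lt_of_lt_leftVal T'.T (Int.ofNat_lt.1 hz)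
  obtain ⟨t', ht'u, htop', hexcess'⟩ := T'.exists_topplesAt_of_lt η hu
  exact ⟨(z, t'), hzy, ht'u.trans_lt hut, htop', hexcess'⟩

end Comparison

theorem statement0_general (d : ℕ) (η : Config d)
    (T T' : TopplingProcedure d) (hT' : T'.Legal)
    (hstab : T.StabilizingFor η) :
    ∀ x : Site d, T'.Tinf η x ≤ T.Tinf η x := by
  intro x
  by_contra! hlt
  obtain ⟨t, hexcess⟩ := exists_excessToppling hlt
  obtain ⟨p, hp, hmin⟩ := (T'.wellFounded_earlierAdjacentToppling η).has_min
    {p | ExcessToppling T T' η p} ⟨(x, t), hexcess⟩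
  obtain ⟨q, hadj, hlt, hq⟩ :=
    exists_earlier_adjacent_excessToppling hT' (fun y => (hstab.2 y).2) hp
  exact hmin q hq ⟨hq.1, hadj, hlt⟩

/-- Theorem 2.8(1): if `T, T'` are legal toppling procedures, both finite for `η`,
and `T` is stabilizing for `η`, then `T'(∞,x,η) ≤ T(∞,x,η)` for every site `x`. -/
theorem statement0 (d : ℕ) (hd : 1 ≤ d) (η : Config d)
    (T T' : TopplingProcedure d) (hT : T.Legal) (hT' : T'.Legal)
    (hfin : T.FiniteFor η) (hfin' : T'.FiniteFor η)
    (hstab : T.StabilizingFor η) :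
    ∀ x : Site d, T'.Tinf η x ≤ T.Tinf η x :=
  statement0_general d η T T' hT' hstab
end

section
/- Let d ≥ 1 and let η ∈ X be a sandpile configuration on ℤ^d. If T and T' are two stabilizing legal toppling procedures for η, then T'(∞, x, η) = T(∞, x, η) for all x ∈ ℤ^d; in particular, for stabilizable η the limit configuration η_∞ = η − Δ T(∞,·,η) does not depend on the choice of stabilizing legal toppling procedure. -/
open MeasureTheory Filter Topology
open scoped ENNReal NNReal

/-!
Compare a legal procedure `T'` with the final toppling numbers `b = T(∞,·,η)` of a stabilizing
one. Suppose `T'` ever topples some site `x` more than `b x` times, and look at the first time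
`t` at which this happens at `x`. Just before `t`, if no neighbour `z` had yet exceeded `b z`,
the configuration at `x` would be at most `η_∞(x) ≤ 2d - 1`, so the toppling would be illegal.
Hence some neighbour exceeded its bound strictly earlier, and iterating produces an infinite
backward chain of topplings, which a toppling procedure does not have. So
`T'(∞,·,η) ≤ T(∞,·,η)`, and by symmetry they agree.
-/

lemma adjacent_update_self_s1 {d : ℕ} (y : Site d) (j : Fin d) (v : ℤ)
    (hv : (v - y j).natAbs = 1) :
    Adjacent (Function.update y j v) y := by
  unfold Adjacent
  rw [Fintype.sum_eq_single j fun i hi => by simp [Function.update_of_ne hi]]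
  simp [hv]

lemma nbrSum_mono {d : ℕ} {f g : Site d → ℤ} {y : Site d}
    (h : ∀ z, Adjacent z y → f z ≤ g z) :
    nbrSum f y ≤ nbrSum g y :=
  Finset.sum_le_sum fun i _ => add_le_add (h _ (adjacent_update_self_s1 y i _ (by simp)))
    (h _ (adjacent_update_self_s1 y i _ (by omega)))

namespace TopplingProcedure

variable {d : ℕ} (P : TopplingProcedure d) (η : Config d)

lemma leftVal_le_of_forall_lt {x : Site d} {t : NNReal} {n : ℕ}
    (h : ∀ s < t, P.T s x η ≤ n) : leftVal P.T t x η ≤ n :=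
  csSup_le' (by rintro _ ⟨s, hs, rfl⟩; exact h s hs)

lemma exists_lt_of_lt_leftVal {x : Site d} {t : NNReal} {n : ℕ}
    (h : n < leftVal P.T t x η) : ∃ s < t, n < P.T s x η := by
  obtain ⟨_, ⟨s, hs, rfl⟩, hn⟩ := exists_lt_of_lt_csSup' h
  exact ⟨s, hs, hn⟩

def FirstPassage (b : Site d → ℕ) (x : Site d) (t : NNReal) : Prop :=
  0 < t ∧ (∀ s < t, P.T s x η ≤ b x) ∧ b x < P.T t x η

variable {P η}

lemma exists_firstPassage_le {b : Site d → ℕ} {x : Site d} {s : NNReal}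
    (h : b x < P.T s x η) : ∃ t ≤ s, P.FirstPassage η b x t := by
  set S : Set NNReal := {u | b x < P.T u x η}
  have hbdd : BddBelow S := OrderBot.bddBelow S
  have hbefore : ∀ u < sInf S, P.T u x η ≤ b x := fun u hu =>
    not_lt.mp fun hu' => (csInf_le hbdd hu').not_gt hu
  -- right-continuity at `sInf S` puts the infimum itself in `S`
  have hmem : b x < P.T (sInf S) x η := by
    obtain ⟨ε, hε, hconst⟩ := P.rightCont x η (sInf S)
    obtain ⟨u, huS, hu⟩ := exists_lt_of_csInf_lt ⟨s, h⟩ (lt_add_of_pos_right (sInf S) hε)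
    rwa [← hconst u (csInf_le hbdd huS) hu]
  have hpos : 0 < sInf S := pos_of_ne_zero fun h0 => by
    rw [h0, P.init] at hmem
    exact Nat.not_lt_zero _ hmem
  exact ⟨sInf S, csInf_le hbdd h, hpos, hbefore, hmem⟩

lemma FirstPassage.leftVal_eq {b : Site d → ℕ} {x : Site d} {t : NNReal}
    (h : P.FirstPassage η b x t) : leftVal P.T t x η = b x :=
  le_antisymm (P.leftVal_le_of_forall_lt η h.2.1) <| by
    have := P.jumpLe x η t
    have := h.2.2
    omega

lemma FirstPassage.topplesAt {b : Site d → ℕ} {x : Site d} {t : NNReal}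
    (h : P.FirstPassage η b x t) : P.TopplesAt η x t := by
  rw [TopplesAt, h.leftVal_eq]
  exact h.2.2

lemma FirstPassage.exists_adjacent_firstPassage (hP : P.Legal) {b : Site d → ℕ}
    {x : Site d} {t : NNReal} (hstable : (η x : ℤ) + nbrSum (fun z => (b z : ℤ)) x
      - 2 * d * (b x : ℤ) ≤ 2 * d - 1)
    (h : P.FirstPassage η b x t) : ∃ y, Adjacent y x ∧ ∃ s < t, P.FirstPassage η b y s := by
  by_contra! hnone
  have hnbr : ∀ z, Adjacent z x → leftVal P.T t z η ≤ b z := fun z hz =>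
    not_lt.mp fun hlt => by
      obtain ⟨u, hut, hu⟩ := P.exists_lt_of_lt_leftVal η hlt
      obtain ⟨s, hsu, hs⟩ := exists_firstPassage_le hu
      exact hnone z hz s (hsu.trans_lt hut) hs
  have hlegal := hP η t x h.1 h.topplesAt
  rw [configLeft, h.leftVal_eq] at hlegal
  have := nbrSum_mono (f := fun z => (leftVal P.T t z η : ℤ)) (g := fun z => (b z : ℤ))
    fun z hz => Int.ofNat_le.mpr (hnbr z hz)
  omega

lemma not_of_backward_closed (Q : Site d → NNReal → Prop)
    (htopples : ∀ x t, Q x t → P.TopplesAt η x t)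
    (hback : ∀ x t, Q x t → ∃ y, Adjacent y x ∧ ∃ s < t, Q y s)
    (x : Site d) (t : NNReal) :
    ¬ Q x t := by
  intro hQ
  choose! prev hadj prevTime hlt hprev using hback
  let step : Site d × NNReal → Site d × NNReal := fun p => (prev p.1 p.2, prevTime p.1 p.2)
  let chain : ℕ → Site d × NNReal := fun n => step^[n] (x, t)
  have hsucc : ∀ n, chain (n + 1) = step (chain n) := fun n =>
    Function.iterate_succ_apply' step n (x, t)
  have hchain : ∀ n, Q (chain n).1 (chain n).2 := by
    intro n
    induction n with
    | zero => exact hQ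
    | succ n ih =>
      rw [hsucc]
      exact hprev _ _ ih
  refine P.noBackwardChain η ⟨fun n => (chain n).1, fun n => (chain n).2, fun n => ?_,
    strictAnti_nat_of_succ_lt fun n => ?_, fun n => htopples _ _ (hchain n)⟩
  · show Adjacent (chain (n + 1)).1 (chain n).1
    rw [hsucc]
    exact hadj _ _ (hchain n)
  · show (chain (n + 1)).2 < (chain n).2
    rw [hsucc]
    exact hlt _ _ (hchain n)

theorem T_le_of_stable (hP : P.Legal) (b : Site d → ℕ)
    (hstable : ∀ x, (η x : ℤ) + nbrSum (fun z => (b z : ℤ)) x - 2 * d * (b x : ℤ)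
      ≤ 2 * d - 1)
    (t : NNReal) (x : Site d) : P.T t x η ≤ b x := by
  refine not_lt.mp fun hlt => ?_
  obtain ⟨s, -, hs⟩ := exists_firstPassage_le hlt
  exact not_of_backward_closed (P.FirstPassage η b) (fun _ _ h => h.topplesAt)
    (fun y _ h => h.exists_adjacent_firstPassage hP (hstable y)) x s hs

theorem Tinf_le_Tinf {P' : TopplingProcedure d} (hP : P.Legal) (hP' : P'.StabilizingFor η)
    (x : Site d) : P.Tinf η x ≤ P'.Tinf η x :=
  csSup_le' <| Set.forall_mem_range.mpr fun t =>
    T_le_of_stable hP (P'.Tinf η) (fun y => (hP'.2 y).2) t x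

end TopplingProcedure

theorem statement1_general (d : ℕ) (η : Config d)
    (T T' : TopplingProcedure d) (hT : T.Legal) (hT' : T'.Legal)
    (hstab : T.StabilizingFor η) (hstab' : T'.StabilizingFor η) :
    (∀ x : Site d, T'.Tinf η x = T.Tinf η x) ∧
      ∀ y : Site d, T'.finalConfig η y = T.finalConfig η y := by
  have hTinf : ∀ x, T'.Tinf η x = T.Tinf η x := fun x =>
    le_antisymm (T'.Tinf_le_Tinf hT' hstab x) (T.Tinf_le_Tinf hT hstab' x)
  exact ⟨hTinf, fun y => by simp only [TopplingProcedure.finalConfig, hTinf]⟩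

/-- Theorem 2.8(2): two stabilizing legal toppling procedures for `η` have the same
toppling numbers `T(∞,x,η)`; in particular the limit configuration `η_∞` is well
defined. -/
theorem statement1 (d : ℕ) (hd : 1 ≤ d) (η : Config d)
    (T T' : TopplingProcedure d) (hT : T.Legal) (hT' : T'.Legal)
    (hstab : T.StabilizingFor η) (hstab' : T'.StabilizingFor η) :
    (∀ x : Site d, T'.Tinf η x = T.Tinf η x) ∧
      ∀ y : Site d, T'.finalConfig η y = T.finalConfig η y :=
  statement1_general d η T T' hT hT' hstab hstab'
end

section
/- Let d = 1 and let μ be a translation invariant probability measure on X = ℕ^ℤ such that E_μ[η(0)] = 1 and such that (1/√n) Σ_{x=−n}^{n} (η(x) − 1) converges in distribution, as n → ∞, to a nondegenerate normal random variable. Then μ is not stabilizable. -/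
open MeasureTheory Filter Topology
open scoped ENNReal NNReal

/-! If `η` is stabilizable, parallel toppling (every site carrying at least two chips topples,
simultaneously) is dominated by the odometer of any stabilizing procedure (least action), so it
converges to an odometer `u` leaving at most one chip per site, which depends measurably and
shift-covariantly on `η`. Counting chips in `[-n, n]` gives `∑_{|x| ≤ n} (η(x) - 1) ≤ u(-n) + u(n)`,
hence by translation invariance `P(n^{-1/2} ∑_{|x| ≤ n} (η(x) - 1) > 2) ≤ 2 P(u(0) > √n) → 0`.
By the portmanteau theorem the Gaussian limit would then give no mass to the open set `(2, ∞)`. -/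

namespace LineSandpile

def toppled (a u : ℤ → ℕ) (z : ℤ) : ℤ :=
  a z + u (z - 1) + u (z + 1) - 2 * u z

def LeavesAtMostOne (a u : ℤ → ℕ) : Prop :=
  ∀ z, toppled a u z ≤ 1

def parallelOdometer (a : ℤ → ℕ) : ℕ → ℤ → ℕ
  | 0, _ => 0
  | k + 1, z => parallelOdometer a k z + if 2 ≤ toppled a (parallelOdometer a k) z then 1 else 0

-- `⨆` over an unbounded range is `0` in `ℕ`; this is the limit of `parallelOdometer` only when
-- some odometer leaving at most one chip exists.
noncomputable def odometer (a : ℤ → ℕ) (z : ℤ) : ℕ :=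
  ⨆ k, parallelOdometer a k z

variable {a q u : ℤ → ℕ}

lemma parallelOdometer_mono (a : ℤ → ℕ) (z : ℤ) : Monotone (parallelOdometer a · z) :=
  monotone_nat_of_le_succ fun _ => Nat.le_add_right _ _

lemma parallelOdometer_le (hq : LeavesAtMostOne a q) (k : ℕ) (z : ℤ) :
    parallelOdometer a k z ≤ q z := by
  induction k generalizing z with
  | zero => exact Nat.zero_le _
  | succ k ih =>
    have hl := ih (z - 1)
    have hr := ih (z + 1)
    have h₀ := ih z
    have hz := hq z
    show parallelOdometer a k z + (if 2 ≤ toppled a (parallelOdometer a k) z then 1 else 0) ≤ q z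
    unfold toppled at hz ⊢
    split_ifs <;> omega

lemma bddAbove_parallelOdometer (hq : LeavesAtMostOne a q) (z : ℤ) :
    BddAbove (Set.range (parallelOdometer a · z)) :=
  ⟨q z, Set.forall_mem_range.2 fun k => parallelOdometer_le hq k z⟩

lemma eventually_parallelOdometer_eq (hq : LeavesAtMostOne a q) (z : ℤ) :
    ∀ᶠ k in atTop, parallelOdometer a k z = odometer a z := by
  obtain ⟨K, hK⟩ := Nat.sSup_mem (Set.range_nonempty _) (bddAbove_parallelOdometer hq z)
  refine eventually_atTop.2 ⟨K, fun k hk => le_antisymm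
    (le_ciSup (bddAbove_parallelOdometer hq z) k) ?_⟩
  exact hK.symm.trans_le (parallelOdometer_mono a z hk)

lemma leavesAtMostOne_odometer (hq : LeavesAtMostOne a q) : LeavesAtMostOne a (odometer a) := by
  intro z
  -- once the counts at `z - 1`, `z`, `z + 1` have settled, two chips at `z` would make it topple
  obtain ⟨k, hl, h₀, hr, h₁⟩ := ((eventually_parallelOdometer_eq hq (z - 1)).and
    ((eventually_parallelOdometer_eq hq z).and ((eventually_parallelOdometer_eq hq (z + 1)).and
      ((tendsto_add_atTop_nat 1).eventually (eventually_parallelOdometer_eq hq z))))).exists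
  have hstep : parallelOdometer a (k + 1) z = parallelOdometer a k z +
      if 2 ≤ toppled a (parallelOdometer a k) z then 1 else 0 := rfl
  unfold toppled at hstep ⊢
  split_ifs at hstep with h <;> omega

lemma sum_Icc_sub_one_le (hu : LeavesAtMostOne a u) (n : ℕ) :
    ∑ x ∈ Finset.Icc (-(n : ℤ)) n, ((a x : ℤ) - 1) ≤ u (-(n : ℤ)) + u n := by
  suffices h : ∀ n : ℕ, ∑ x ∈ Finset.Icc (-(n : ℤ)) n, ((a x : ℤ) - 1) ≤
      u (-(n : ℤ)) + u n - u (-(n : ℤ) - 1) - u (n + 1) by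
    linarith [h n, Int.natCast_nonneg (u (-(n : ℤ) - 1)), Int.natCast_nonneg (u (n + 1))]
  intro n
  induction n with
  | zero =>
    have h0 := hu 0
    simp only [toppled, zero_sub, zero_add] at h0
    simp only [CharP.cast_eq_zero, neg_zero, Finset.Icc_self, Finset.sum_singleton, zero_sub,
      zero_add]
    linarith
  | succ n ih =>
    have hIcc : Finset.Icc (-((n + 1 : ℕ) : ℤ)) (n + 1 : ℕ) =
        insert (-(n : ℤ) - 1) (insert ((n : ℤ) + 1) (Finset.Icc (-(n : ℤ)) n)) := by
      ext x; simp only [Finset.mem_Icc, Finset.mem_insert]; omega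
    rw [hIcc, Finset.sum_insert (by simp; omega), Finset.sum_insert (by simp)]
    have hl := hu (-(n : ℤ) - 1)
    have hr := hu (n + 1)
    simp only [toppled, sub_add_cancel, add_sub_cancel_right] at hl hr
    push_cast
    rw [neg_add']
    linarith

lemma parallelOdometer_comp_add_right (a : ℤ → ℕ) (t : ℤ) (k : ℕ) (z : ℤ) :
    parallelOdometer (fun w => a (w + t)) k z = parallelOdometer a k (z + t) := by
  induction k generalizing z with
  | zero => rfl
  | succ k ih =>
    simp only [parallelOdometer, toppled, ih, sub_add_eq_add_sub, add_right_comm _ (1 : ℤ) t]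
    rfl

lemma odometer_comp_add_right (a : ℤ → ℕ) (t z : ℤ) :
    odometer (fun w => a (w + t)) z = odometer a (z + t) := by
  simp only [odometer, parallelOdometer_comp_add_right]

lemma measurable_parallelOdometer (k : ℕ) (z : ℤ) :
    Measurable fun a : ℤ → ℕ => parallelOdometer a k z := by
  induction k generalizing z with
  | zero => exact measurable_const
  | succ k ih =>
    have hset : MeasurableSet {a : ℤ → ℕ | 2 ≤ toppled a (parallelOdometer a k) z} := by
      unfold toppled
      exact measurableSet_le measurable_const (by fun_prop)
    exact (ih z).add (Measurable.ite hset measurable_const measurable_const)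

lemma measurable_odometer (z : ℤ) : Measurable fun a : ℤ → ℕ => odometer a z :=
  Measurable.iSup fun k => measurable_parallelOdometer k z

end LineSandpile

open LineSandpile

lemma tendsto_measure_lt_atTop {Ω : Type*} [MeasurableSpace Ω] (μ : Measure Ω) [IsFiniteMeasure μ]
    {f : Ω → ℝ} (hf : Measurable f) : Tendsto (fun c => μ {ω | c < f ω}) atTop (𝓝 0) := by
  have h := tendsto_measure_iInter_atTop (μ := μ) (s := fun c : ℝ => {ω | c < f ω})
    (fun _ => (measurableSet_lt measurable_const hf).nullMeasurableSet)
    (fun _ _ hcd _ h => hcd.trans_lt h) ⟨0, measure_ne_top _ _⟩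
  rwa [Set.iInter_eq_empty_iff.2 fun ω => ⟨f ω, fun h => lt_irrefl (f ω) h⟩, measure_empty] at h

lemma measure_eq_zero_of_tendsto_integral_comp {Ω E ι : Type*} [MeasurableSpace Ω]
    [MeasurableSpace E] [TopologicalSpace E] [OpensMeasurableSpace E] [HasOuterApproxClosed E]
    {L : Filter ι} [L.NeBot] {μ : Measure Ω} [IsProbabilityMeasure μ] {ν : Measure E}
    [IsProbabilityMeasure ν] {Y : ι → Ω → E} (hY : ∀ i, AEMeasurable (Y i) μ)
    (h : ∀ f : BoundedContinuousFunction E ℝ,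
      Tendsto (fun i => ∫ ω, f (Y i ω) ∂μ) L (𝓝 (∫ y, f y ∂ν)))
    {G : Set E} (hG : IsOpen G) (hnull : Tendsto (fun i => μ (Y i ⁻¹' G)) L (𝓝 0)) :
    ν G = 0 := by
  let ρ : ι → ProbabilityMeasure E :=
    fun i => ⟨μ.map (Y i), Measure.isProbabilityMeasure_map (hY i)⟩
  have hρ : Tendsto ρ L (𝓝 ⟨ν, ‹_›⟩) :=
    ProbabilityMeasure.tendsto_iff_forall_integral_tendsto.2 fun f => by
      simpa only [ρ, ProbabilityMeasure.coe_mk,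
        integral_map (hY _) f.continuous.aestronglyMeasurable] using h f
  have hle := ProbabilityMeasure.le_liminf_measure_open_of_tendsto hρ hG
  simp only [ρ, ProbabilityMeasure.coe_mk,
    Measure.map_apply_of_aemeasurable (hY _) hG.measurableSet, hnull.liminf_eq] at hle
  exact le_zero_iff.1 hle

lemma gaussianReal_Ioi_ne_zero (m : ℝ) {v : ℝ≥0} (hv : v ≠ 0) (a : ℝ) :
    ProbabilityTheory.gaussianReal m v (Set.Ioi a) ≠ 0 := fun h => by
  simpa using ProbabilityTheory.gaussianReal_absolutelyContinuous' m hv h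

lemma measurable_shiftConfig {d : ℕ} (v : Site d) : Measurable (shiftConfig v) :=
  measurable_pi_lambda _ fun _ => measurable_pi_apply _

lemma TransInvariant.measure_preimage_shiftConfig {d : ℕ} {μ : Measure (Config d)}
    (hinv : TransInvariant μ) (v : Site d) {E : Set (Config d)} (hE : MeasurableSet E) :
    μ (shiftConfig v ⁻¹' E) = μ E := by
  rw [← Measure.map_apply (measurable_shiftConfig v) hE, hinv v]

def toLine (η : Config 1) : ℤ → ℕ := fun z => η fun _ => z

noncomputable def centeredSum (n : ℕ) (η : Config 1) : ℝ :=
  ∑ x ∈ Finset.Icc (-(n : ℤ)) n, ((η fun _ => x : ℝ) - 1)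

lemma measurable_toLine : Measurable toLine :=
  measurable_pi_lambda _ fun _ => measurable_pi_apply _

lemma toLine_shiftConfig (t : ℤ) (η : Config 1) :
    toLine (shiftConfig (fun _ => t) η) = fun w => toLine η (w + t) := rfl

lemma Stabilizable.exists_leavesAtMostOne {η : Config 1} (h : Stabilizable η) :
    ∃ q, LeavesAtMostOne (toLine η) q := by
  obtain ⟨P, -, -, hstable⟩ := h
  refine ⟨fun z => P.Tinf η fun _ => z, fun z => ?_⟩
  have hupd : ∀ w : ℤ, Function.update (fun _ : Fin 1 => z) 0 w = fun _ => w :=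
    fun w => funext fun j => by fin_cases j; rfl
  have hz := (hstable fun _ => z).2
  simp only [TopplingProcedure.finalConfig, nbrSum, Fin.sum_univ_one, hupd, Nat.cast_one,
    mul_one] at hz
  simp only [toppled, toLine]
  linarith

lemma centeredSum_le_odometer {η : Config 1} (h : Stabilizable η) (n : ℕ) :
    centeredSum n η ≤ odometer (toLine η) (-n) + odometer (toLine η) n := by
  obtain ⟨q, hq⟩ := h.exists_leavesAtMostOne
  unfold centeredSum
  exact_mod_cast sum_Icc_sub_one_le (leavesAtMostOne_odometer hq) n

lemma measurable_odometer_toLine (z : ℤ) :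
    Measurable fun η : Config 1 => (odometer (toLine η) z : ℝ) :=
  measurable_from_top.comp ((measurable_odometer z).comp measurable_toLine)

lemma TransInvariant.measure_lt_odometer {μ : Measure (Config 1)} (hinv : TransInvariant μ)
    (c : ℝ) (z : ℤ) :
    μ {η | c < odometer (toLine η) z} = μ {η | c < odometer (toLine η) 0} := by
  have hpre : {η : Config 1 | c < odometer (toLine η) z} =
      shiftConfig (fun _ => z) ⁻¹' {η | c < odometer (toLine η) 0} := by
    ext η
    simp only [Set.mem_preimage, Set.mem_ofPred_eq, toLine_shiftConfig, odometer_comp_add_right,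
      zero_add]
  rw [hpre, hinv.measure_preimage_shiftConfig _
    (measurableSet_lt measurable_const (measurable_odometer_toLine 0))]

lemma TransInvariant.measure_centeredSum_gt_le {μ : Measure (Config 1)} (hinv : TransInvariant μ)
    (hstab : ∀ᵐ η ∂μ, Stabilizable η) (n : ℕ) :
    μ {η | 2 < (√n)⁻¹ * centeredSum n η} ≤
      2 * μ {η | √n < odometer (toLine η) 0} := by
  calc _ ≤ μ ({η | √n < odometer (toLine η) (-n)} ∪ {η | √n < odometer (toLine η) n}) := by
        refine measure_mono_ae ?_
        filter_upwards [hstab] with η hη hgt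
        replace hgt : 2 < (√n)⁻¹ * _ := hgt
        have hn : 0 < √n := (Real.sqrt_nonneg _).lt_of_ne' fun h0 => by
          rw [h0, inv_zero, zero_mul] at hgt
          norm_num at hgt
        have hsum := centeredSum_le_odometer hη n
        rw [lt_inv_mul_iff₀ hn] at hgt
        rcases lt_or_ge √n (odometer (toLine η) (-n) : ℝ) with hl | hl
        exacts [Or.inl hl, Or.inr (show √n < (odometer (toLine η) n : ℝ) by linarith)]
    _ ≤ _ := measure_union_le _ _
    _ = _ := by rw [hinv.measure_lt_odometer _ (-n), hinv.measure_lt_odometer _ n, two_mul]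

theorem statement10_general (μ : Measure (Config 1)) [IsProbabilityMeasure μ]
    (hinv : TransInvariant μ)
    (m : ℝ) (v : ℝ≥0) (hv : v ≠ 0)
    (hclt : ∀ f : BoundedContinuousFunction ℝ ℝ,
      Tendsto (fun n : ℕ => ∫ η, f ((Real.sqrt n)⁻¹ *
          ∑ x ∈ Finset.Icc (-(n : ℤ)) (n : ℤ), ((η (fun _ => x) : ℝ) - 1)) ∂μ)
        atTop (𝓝 (∫ y, f y ∂(ProbabilityTheory.gaussianReal m v)))) :
    ¬ ∀ᵐ η ∂μ, Stabilizable η := by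
  intro hstab
  have hmeas : ∀ n : ℕ, Measurable fun η => (√n)⁻¹ * centeredSum n η := by
    unfold centeredSum
    fun_prop
  have htail : Tendsto (fun n : ℕ => 2 * μ {η | √n < odometer (toLine η) 0}) atTop (𝓝 0) := by
    simpa using ENNReal.Tendsto.const_mul ((tendsto_measure_lt_atTop μ
      (measurable_odometer_toLine 0)).comp (Real.tendsto_sqrt_atTop.comp
        tendsto_natCast_atTop_atTop)) (Or.inr ENNReal.ofNat_ne_top)
  refine gaussianReal_Ioi_ne_zero m hv 2 (measure_eq_zero_of_tendsto_integral_comp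
    (fun n => (hmeas n).aemeasurable) hclt isOpen_Ioi ?_)
  exact tendsto_of_tendsto_of_tendsto_of_le_of_le tendsto_const_nhds htail (fun _ => zero_le)
    (hinv.measure_centeredSum_gt_le hstab)

/-- Theorem 3.5: in `d = 1`, a translation invariant probability measure with
`E_μ[η(0)] = 1` satisfying a central limit theorem (the normalized centered sums
`(1/√n) ∑_{x=-n}^n (η(x) − 1)` converge in distribution to a nondegenerate normal
random variable) is not stabilizable. -/
theorem statement10 (μ : Measure (Config 1)) [IsProbabilityMeasure μ]
    (hinv : TransInvariant μ)
    (hmean : ∫⁻ η, (η (0 : Site 1) : ℝ≥0∞) ∂μ = 1)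
    (m : ℝ) (v : ℝ≥0) (hv : v ≠ 0)
    (hclt : ∀ f : BoundedContinuousFunction ℝ ℝ,
      Tendsto (fun n : ℕ => ∫ η, f ((Real.sqrt n)⁻¹ *
          ∑ x ∈ Finset.Icc (-(n : ℤ)) (n : ℤ), ((η (fun _ => x) : ℝ) - 1)) ∂μ)
        atTop (𝓝 (∫ y, f y ∂(ProbabilityTheory.gaussianReal m v)))) :
    ¬ ∀ᵐ η ∂μ, Stabilizable η :=
  statement10_general μ hinv m v hv hclt
end

section
/- Let d ≥ 1, let η ∈ X, let T be a legal toppling procedure, let t > 0, and let Λ be a finite subset of the set T_t = {x ∈ ℤ^d : T(t,x,η) > 0} of sites that have toppled at least once up to time t. Let β_Λ be the number of internal bonds of Λ, i.e., nearest-neighbor bonds of ℤ^d with both endpoints in Λ. Then Σ_{x∈Λ} η_t(x) ≥ β_Λ. -/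
open MeasureTheory Filter Topology
open scoped ENNReal NNReal

/-!
Let `s_x` be the last time `≤ t` at which `x ∈ Λ` topples. Legality gives `η_{s_x-}(x) ≥ 2d`;
at `s_x` the site `x` loses `2d` grains and never topples again before `t`, while it gains a
grain from every neighbour that topples in `[s_x, t]`, in particular from every neighbour
`y ∈ Λ` with `s_y ≥ s_x`. Hence `η_t(x)` is at least the number of such neighbours, and in
the sum over `Λ` every internal bond is counted at its endpoint with the smaller last
toppling time.
-/

namespace TopplingProcedure

variable {d : ℕ} (P : TopplingProcedure d) (η : Config d)

lemma T_le_leftVal {x : Site d} {s t : NNReal} (h : s < t) :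
    P.T s x η ≤ leftVal P.T t x η :=
  le_csSup ⟨P.T t x η, by rintro _ ⟨u, hu, rfl⟩; exact P.mono x η hu.le⟩ ⟨s, h, rfl⟩

lemma leftVal_le_T {x : Site d} {s t : NNReal} (h : s ≤ t) :
    leftVal P.T s x η ≤ P.T t x η :=
  P.leftVal_le_of_forall_lt η fun _ hu => P.mono x η (hu.le.trans h)

lemma leftVal_mono (x : Site d) : Monotone fun t => leftVal P.T t x η :=
  fun _ _ h => P.leftVal_le_of_forall_lt η fun _ hu => P.T_le_leftVal η (hu.trans_le h)

variable {P η} in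
lemma TopplesAt.pos {x : Site d} {s : NNReal} (h : P.TopplesAt η x s) : 0 < s := by
  refine pos_iff_ne_zero.2 fun hs => ?_
  have h' : leftVal P.T s x η < P.T s x η := h
  simp [hs, P.init] at h'

/-- Right-continuity makes the first time `c` at which `T(·,x,η)` exceeds `T(a,x,η)` a
toppling time. -/
lemma exists_topplesAt_of_T_lt {x : Site d} {a b : NNReal} (h : P.T a x η < P.T b x η) :
    ∃ c ∈ Set.Ioc a b, P.TopplesAt η x c := by
  set S : Set NNReal := {s | P.T a x η < P.T s x η}
  have hbS : b ∈ S := h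
  set c := sInf S
  have hcS : c ∈ S := by
    obtain ⟨ε, hε, hconst⟩ := P.rightCont x η c
    obtain ⟨u, huS, hu⟩ := exists_lt_of_csInf_lt ⟨b, hbS⟩ (lt_add_of_pos_right c hε)
    have huS' : P.T a x η < P.T u x η := huS
    rwa [hconst u (csInf_le (OrderBot.bddBelow S) huS) hu] at huS'
  have hac : a < c := lt_of_not_ge fun hca => (P.mono x η hca).not_gt hcS
  have hleft : leftVal P.T c x η ≤ P.T a x η :=
    P.leftVal_le_of_forall_lt η fun u hu =>
      le_of_not_gt fun huS => (csInf_le (OrderBot.bddBelow S) huS).not_gt hu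
  exact ⟨c, ⟨hac, csInf_le (OrderBot.bddBelow S) hbS⟩, hleft.trans_lt hcS⟩

/-- The last time `≤ t` at which `x` topples (junk value `0` if `x` has not toppled by `t`). -/
noncomputable def lastTopple (t : NNReal) (x : Site d) : NNReal :=
  sSup {s | s ≤ t ∧ P.TopplesAt η x s}

lemma lastTopple_mem {t : NNReal} {x : Site d} (hx : 0 < P.T t x η) :
    P.lastTopple η t x ≤ t ∧ P.TopplesAt η x (P.lastTopple η t x) := by
  obtain ⟨c, ⟨-, hct⟩, hc⟩ := P.exists_topplesAt_of_T_lt η (a := 0) (b := t) (by rwa [P.init])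
  exact Set.Nonempty.csSup_mem (s := {s | s ≤ t ∧ P.TopplesAt η x s}) ⟨c, hct, hc⟩
    (P.finJumps x η t)

lemma T_lastTopple {t : NNReal} {x : Site d} (hx : 0 < P.T t x η) :
    P.T (P.lastTopple η t x) x η = P.T t x η := by
  refine le_antisymm (P.mono x η (P.lastTopple_mem η hx).1) (le_of_not_gt fun h => ?_)
  obtain ⟨c, ⟨hlast, hct⟩, hc⟩ := P.exists_topplesAt_of_T_lt η h
  exact hlast.not_ge (le_csSup (P.finJumps x η t).bddAbove ⟨hct, hc⟩)

end TopplingProcedure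

section Bonds

variable {d : ℕ}

def neighbor (x : Site d) : Fin d × Bool → Site d
  | (i, true) => Function.update x i (x i + 1)
  | (i, false) => Function.update x i (x i - 1)

lemma sum_neighbor {M : Type*} [AddCommMonoid M] (f : Site d → M) (x : Site d) :
    ∑ w, f (neighbor x w) = nbrSum f x := by
  simp only [nbrSum, Fintype.sum_prod_type, Fintype.sum_bool, neighbor]

lemma neighbor_false_update_add_one (x : Site d) (i : Fin d) :
    neighbor (Function.update x i (x i + 1)) (i, false) = x := by
  funext j
  rcases eq_or_ne j i with rfl | hj
  · simp [neighbor]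
  · simp [neighbor, Function.update_of_ne hj]

def laterNeighborDirs {α : Type*} [LinearOrder α] (τ : Site d → α) (Λ : Finset (Site d))
    (x : Site d) : Finset (Fin d × Bool) :=
  {w | neighbor x w ∈ Λ ∧ τ x ≤ τ (neighbor x w)}

lemma ncard_bonds_le_sum_card_laterNeighborDirs {α : Type*} [LinearOrder α]
    (τ : Site d → α) (Λ : Finset (Site d)) :
    {p : Site d × Site d | p.1 ∈ Λ ∧ p.2 ∈ Λ ∧
        ∃ i, p.2 = Function.update p.1 i (p.1 i + 1)}.ncard
      ≤ ∑ x ∈ Λ, (laterNeighborDirs τ Λ x).card := by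
  let bond : (_ : Site d) × (Fin d × Bool) → Site d × Site d := fun q =>
    if q.2.2 then (q.1, neighbor q.1 q.2) else (neighbor q.1 q.2, q.1)
  have hsub : {p : Site d × Site d | p.1 ∈ Λ ∧ p.2 ∈ Λ ∧
      ∃ i, p.2 = Function.update p.1 i (p.1 i + 1)}
      ⊆ ((Λ.sigma (laterNeighborDirs τ Λ)).image bond : Set _) := by
    rintro ⟨x, y⟩ ⟨hx, hy, i, hxy⟩
    obtain rfl : y = Function.update x i (x i + 1) := hxy
    simp only [Finset.coe_image, Set.mem_image, Finset.mem_coe, Finset.mem_sigma,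
      laterNeighborDirs, Finset.mem_filter, Finset.mem_univ, true_and]
    rcases le_total (τ x) (τ (Function.update x i (x i + 1))) with h | h
    · exact ⟨⟨x, (i, true)⟩, ⟨hx, hy, h⟩, rfl⟩
    · refine ⟨⟨_, (i, false)⟩, ⟨hy, ?_⟩, ?_⟩ <;>
        simp only [bond, neighbor_false_update_add_one, Bool.false_eq_true, if_false]
      exact ⟨hx, h⟩
  calc _ ≤ ((Λ.sigma (laterNeighborDirs τ Λ)).image bond : Set _).ncard :=
        Set.ncard_le_ncard hsub (Finset.finite_toSet _)
    _ ≤ (Λ.sigma (laterNeighborDirs τ Λ)).card := by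
        rw [Set.ncard_coe_finset]; exact Finset.card_image_le
    _ = _ := Finset.card_sigma _ _

end Bonds

namespace TopplingProcedure

variable {d : ℕ} (P : TopplingProcedure d) (η : Config d)

lemma card_laterNeighborDirs_le_configAt (hP : P.Legal) {t : NNReal} {Λ : Finset (Site d)}
    (hΛ : ∀ x ∈ Λ, 0 < P.T t x η) {x : Site d} (hx : x ∈ Λ) :
    ((laterNeighborDirs (P.lastTopple η t) Λ x).card : ℤ) ≤ P.configAt η t x := by
  obtain ⟨hst, htop⟩ := P.lastTopple_mem η (hΛ x hx)
  set s := P.lastTopple η t x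
  have hlegal : 2 * d ≤ P.configLeft η s x := hP η s x htop.pos htop
  have hjump : (P.T t x η : ℤ) ≤ leftVal P.T s x η + 1 := by
    rw [← P.T_lastTopple η (hΛ x hx)]; exact_mod_cast P.jumpLe x η s
  have hgain : ((laterNeighborDirs (P.lastTopple η t) Λ x).card : ℤ)
      ≤ nbrSum (fun y => (P.T t y η : ℤ)) x - nbrSum (fun y => (leftVal P.T s y η : ℤ)) x := by
    rw [laterNeighborDirs, Finset.card_filter, ← sum_neighbor, ← sum_neighbor,
      ← Finset.sum_sub_distrib]
    push_cast
    refine Finset.sum_le_sum fun w _ => ?_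
    split_ifs with h
    · obtain ⟨hyΛ, hsy⟩ := h
      obtain ⟨hyt, hytop⟩ := P.lastTopple_mem η (hΛ _ hyΛ)
      have : leftVal P.T s (neighbor x w) η < P.T t (neighbor x w) η :=
        (P.leftVal_mono η _ hsy).trans_lt (hytop.trans_le (P.mono _ η hyt))
      omega
    · have := P.leftVal_le_T η (x := neighbor x w) hst
      omega
  have hloss : 2 * (d : ℤ) * P.T t x η ≤ 2 * d * leftVal P.T s x η + 2 * d := by
    nlinarith
  simp only [configAt, configLeft] at hlegal ⊢
  linarith

end TopplingProcedure

theorem statement12_general (d : ℕ) (η : Config d) (P : TopplingProcedure d)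
    (hP : P.Legal) (t : NNReal) (Λ : Finset (Site d))
    (hΛ : ∀ x ∈ Λ, 0 < P.T t x η) :
    ({p : Site d × Site d | p.1 ∈ Λ ∧ p.2 ∈ Λ ∧
        ∃ i, p.2 = Function.update p.1 i (p.1 i + 1)}.ncard : ℤ)
      ≤ ∑ x ∈ Λ, P.configAt η t x :=
  calc _ ≤ ∑ x ∈ Λ, ((laterNeighborDirs (P.lastTopple η t) Λ x).card : ℤ) := by
        exact_mod_cast ncard_bonds_le_sum_card_laterNeighborDirs (P.lastTopple η t) Λ
    _ ≤ _ := Finset.sum_le_sum fun _ hx => P.card_laterNeighborDirs_le_configAt η hP hΛ hx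

/-- Lemma 4.3: if `Λ` is a finite set of sites that have all toppled by time `t`
under a legal toppling procedure, then `∑_{x∈Λ} η_t(x) ≥ β_Λ`, where `β_Λ` is the
number of internal nearest-neighbor bonds of `Λ`. -/
theorem statement12 (d : ℕ) (hd : 1 ≤ d) (η : Config d) (P : TopplingProcedure d)
    (hP : P.Legal) (t : NNReal) (ht : 0 < t) (Λ : Finset (Site d))
    (hΛ : ∀ x ∈ Λ, 0 < P.T t x η) :
    ({p : Site d × Site d | p.1 ∈ Λ ∧ p.2 ∈ Λ ∧
        ∃ i, p.2 = Function.update p.1 i (p.1 i + 1)}.ncard : ℤ)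
      ≤ ∑ x ∈ Λ, P.configAt η t x :=
  statement12_general d η P hP t Λ hΛ
end

section
/- Let d = 1 and let ξ ∈ ℕ^ℤ be the configuration with ξ(x) = 1 for all x ≠ 0 and ξ(0) = 2. Then ξ is not stabilizable. -/
open MeasureTheory Filter Topology
open scoped ENNReal NNReal

/- If `u = T(∞,·,ξ)` stabilized `ξ`, then `u(z+1) + u(z-1) ≤ 2 u(z)` for `z ≠ 0`, so `u` is
concave on each half-line `z ≥ 0` and `z ≤ 0`; being nonnegative it cannot decrease there, whence
`u(±1) ≥ u(0)`. But stability at the origin forces `u(1) + u(-1) ≤ 2 u(0) - 1`. -/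

section ConcaveSeq

variable {f : ℕ → ℤ}

lemma sub_le_sub_of_concave (hf : ∀ k, f (k + 2) + f k ≤ 2 * f (k + 1)) (k : ℕ) :
    f (k + 1) - f k ≤ f 1 - f 0 := by
  induction k with
  | zero => simp
  | succ k ih =>
    have := hf k
    rw [show k + 1 + 1 = k + 2 from rfl]
    omega

lemma le_add_mul_of_concave (hf : ∀ k, f (k + 2) + f k ≤ 2 * f (k + 1)) (k : ℕ) :
    f k ≤ f 0 + k * (f 1 - f 0) := by
  induction k with
  | zero => simp
  | succ k ih =>
    have := sub_le_sub_of_concave hf k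
    push_cast
    linarith

lemma le_succ_of_concave_of_nonneg (hf : ∀ k, f (k + 2) + f k ≤ 2 * f (k + 1))
    (h0 : ∀ k, 0 ≤ f k) : f 0 ≤ f 1 := by
  by_contra! hlt
  have hk := le_add_mul_of_concave hf ((f 0).toNat + 1)
  have := h0 ((f 0).toNat + 1)
  push_cast at hk
  rw [Int.toNat_of_nonneg (h0 0)] at hk
  have hslope : f 1 - f 0 ≤ -1 := by omega
  linarith [mul_le_mul_of_nonneg_left hslope (by linarith [h0 0] : 0 ≤ f 0 + 1)]

end ConcaveSeq

lemma nbrSum_site_one {M : Type*} [AddCommMonoid M] (g : Site 1 → M) (z : ℤ) :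
    nbrSum g (fun _ => z) = g (fun _ => z + 1) + g (fun _ => z - 1) := by
  have hupdate (w : ℤ) : Function.update (fun _ : Fin 1 => z) 0 w = fun _ => w := by
    funext i
    rw [Subsingleton.elim i 0, Function.update_self]
  simp only [nbrSum, Fin.sum_univ_one, hupdate]

lemma exists_unstable_sub_laplacian (u : Site 1 → ℕ) :
    ∃ y : Site 1, 1 < ((if y = 0 then 2 else 1 : ℕ) : ℤ) +
      nbrSum (fun x => (u x : ℤ)) y - 2 * u y := by
  by_contra! hstable
  set m : ℤ → ℤ := fun z => (u fun _ => z : ℤ)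
  have hsite (z : ℤ) : ((fun _ => z : Site 1) = 0) ↔ z = 0 := funext_iff.trans (by simp)
  have hm (z : ℤ) : ((if z = 0 then 2 else 1 : ℕ) : ℤ) + m (z + 1) + m (z - 1) - 2 * m z ≤ 1 := by
    have := hstable fun _ => z
    simp only [nbrSum_site_one, hsite] at this
    linarith
  have hconcave (z : ℤ) (hz : z ≠ 0) : m (z + 1) + m (z - 1) ≤ 2 * m z := by
    have := hm z
    simp only [hz, if_false] at this
    push_cast at this
    linarith
  have hright : m 0 ≤ m 1 :=
    le_succ_of_concave_of_nonneg (f := fun k => m k)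
      (fun k => by have := hconcave (k + 1) (by omega); push_cast; ring_nf at this ⊢; linarith)
      (fun _ => Int.natCast_nonneg _)
  have hleft : m 0 ≤ m (-1) :=
    le_succ_of_concave_of_nonneg (f := fun k => m (-k))
      (fun k => by have := hconcave (-(k + 1)) (by omega); push_cast; ring_nf at this ⊢; linarith)
      (fun _ => Int.natCast_nonneg _)
  have horigin := hm 0
  simp only [if_true, zero_add, zero_sub] at horigin
  push_cast at horigin
  linarith

/-- Example 2.7: in `d = 1`, the configuration with height 1 everywhere except
height 2 at the origin is not stabilizable. -/
theorem statement17 :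
    ¬ Stabilizable (fun x : Site 1 => if x = 0 then 2 else 1) := by
  rintro ⟨P, -, -, hstable⟩
  obtain ⟨y, hy⟩ := exists_unstable_sub_laplacian (P.Tinf fun x : Site 1 => if x = 0 then 2 else 1)
  have := (hstable y).2
  simp only [TopplingProcedure.finalConfig] at this
  push_cast at this hy
  linarith
end
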